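/- For F^L(x) = x − Σ_{j=1}^{L} 2^{−2j} G^j(x) with G(x) = min{2x, 2(1−x)}, we have 0 ≤ F^L(x) − x² ≤ 2^{−2L−2} for all x ∈ [0,1]. -/

import Mathlib

/-- The tooth function `G(x) = min (2x) (2(1-x))`. -/
noncomputable def sawG (x : ℝ) : ℝ := min (2 * x) (2 * (1 - x))

/-- The sawtooth approximation `F^L(x) = x - ∑_{j=1}^L 2^{-2j} G^j(x)`. -/
noncomputable def sawF (L : ℕ) (x : ℝ) : ℝ :=
  x - ∑ j ∈ Finset.Icc 1 L, (2 : ℝ) ^ (-(2 * (j : ℤ))) * sawG^[j] x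

/-!
Both branches `2x` and `2(1-x)` of `G` satisfy `x² = x - G(x)/2 + G(x)²/4`, and peeling
off the first term of the sum gives `F^{L+1}(x) = x - G(x)/2 + F^L(G(x))/4`. Hence the error
`E_L(x) = F^L(x) - x²` satisfies `E_{L+1}(x) = E_L(G(x))/4`, and since `G` maps `[0,1]` into
itself, induction from `E_0(x) = x - x² ∈ [0, 1/4]` gives `E_L(x) ∈ [0, 4^{-(L+1)}]`.
-/

open Finset

theorem sum_Icc_one_pow_mul_iterate_succ {R : Type*} [CommSemiring R] (f : R → R) (c x : R)
    (n : ℕ) :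
    ∑ j ∈ Icc 1 (n + 1), c ^ j * f^[j] x = c * f x + c * ∑ j ∈ Icc 1 n, c ^ j * f^[j] (f x) := by
  induction n generalizing x with
  | zero => simp
  | succ n ih =>
    rw [sum_Icc_succ_top (by omega), ih, sum_Icc_succ_top (by omega),
      Function.iterate_succ_apply f (n + 1)]
    ring

theorem two_zpow_neg_two_mul (n : ℕ) : (2 : ℝ) ^ (-(2 * (n : ℤ))) = 4⁻¹ ^ n := by
  rw [zpow_neg, zpow_mul, inv_pow]
  norm_num

theorem sawF_eq_sub_sum (L : ℕ) (x : ℝ) :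
    sawF L x = x - ∑ j ∈ Icc 1 L, 4⁻¹ ^ j * sawG^[j] x := by
  simp only [sawF, two_zpow_neg_two_mul]

theorem sawF_zero (x : ℝ) : sawF 0 x = x := by
  simp [sawF]

theorem sawF_succ (L : ℕ) (x : ℝ) :
    sawF (L + 1) x = x - sawG x / 2 + sawF L (sawG x) / 4 := by
  rw [sawF_eq_sub_sum, sawF_eq_sub_sum, sum_Icc_one_pow_mul_iterate_succ]
  ring

theorem sawG_mapsTo : Set.MapsTo sawG (Set.Icc 0 1) (Set.Icc 0 1) := by
  rintro x ⟨h0, h1⟩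
  rcases le_total x (1 / 2) with h | h
  · rw [sawG, min_eq_left (by linarith)]
    constructor <;> linarith
  · rw [sawG, min_eq_right (by linarith)]
    constructor <;> linarith

theorem sq_eq_sub_sawG_add (x : ℝ) :
    x ^ 2 = x - sawG x / 2 + sawG x ^ 2 / 4 := by
  rcases min_choice (2 * x) (2 * (1 - x)) with h | h <;> rw [sawG, h] <;> ring

theorem sawF_succ_sub_sq (L : ℕ) (x : ℝ) :
    sawF (L + 1) x - x ^ 2 = (sawF L (sawG x) - sawG x ^ 2) / 4 := by
  rw [sawF_succ, sq_eq_sub_sawG_add x]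
  ring

theorem sawF_sub_sq_mem_Icc (L : ℕ) {x : ℝ} (hx : x ∈ Set.Icc (0 : ℝ) 1) :
    sawF L x - x ^ 2 ∈ Set.Icc 0 (4⁻¹ ^ (L + 1)) := by
  induction L generalizing x with
  | zero =>
    obtain ⟨h0, h1⟩ := hx
    rw [sawF_zero, zero_add, pow_one]
    constructor <;> nlinarith [sq_nonneg (x - 1 / 2)]
  | succ L ih =>
    obtain ⟨hE0, hE1⟩ := ih (sawG_mapsTo hx)
    rw [sawF_succ_sub_sq L x, pow_succ]
    constructor <;> linarith

/-- `0 ≤ F^L(x) - x² ≤ 2^{-2L-2}` for all `x ∈ [0,1]`. -/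
theorem sawF_overestimates (L : ℕ) (x : ℝ) (hx : x ∈ Set.Icc (0 : ℝ) 1) :
    0 ≤ sawF L x - x ^ 2 ∧ sawF L x - x ^ 2 ≤ (2 : ℝ) ^ (-(2 * (L : ℤ)) - 2) := by
  have hexp : -(2 * (L : ℤ)) - 2 = -(2 * ((L + 1 : ℕ) : ℤ)) := by push_cast; ring
  rw [hexp, two_zpow_neg_two_mul]
  exact sawF_sub_sq_mem_Icc L hx
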